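/- arXiv:2504.14251 — 4 statements merged into one kernel-verified Lean document; each statement's English description precedes it below -/
import Mathlib

section
/- The function g(y) = (1 - y)·Φ(1 - y, 1, Δ), where Φ(z,1,Δ) = ∑_{j=0}^∞ z^j/(j+Δ) and Δ ≥ 2 is a fixed integer, is continuous and strictly decreasing on (0, 1), tends to +∞ as y → 0⁺, and satisfies g(1) = 0. Consequently, for every ε with 0 < Δε < g(y₀) for some y₀ ∈ (0,1), the equation g(y) = Δε has a unique solution y ∈ (0,1). -/
/-!
With `x = 1 - y`, `g(y) = x Φ(x, 1, Δ) = ∑ x^(j+1)/(j+Δ)` is a power series with positive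
coefficients and radius of convergence `1`: it is continuous on `(-1, 1)`, vanishes at `0` and is
strictly increasing on `[0, 1)`. As `x → 1⁻` it dominates `x^N ∑_{j<N} 1/(j+Δ)` for every `N`,
so it tends to `∞` by the divergence of the harmonic series. Existence of the solution is then
the intermediate value theorem on `[y₀, 1]`, and uniqueness is strict monotonicity.
-/

open Filter Set Topology

/-- `Φ(x, 1, a)`, the Lerch transcendent at `s = 1`. -/
noncomputable def lerchPhi (x a : ℝ) : ℝ := ∑' j : ℕ, x ^ j / ((j : ℝ) + a)

section lerchPhi

variable {a x : ℝ}

lemma norm_pow_div_natCast_add_le (ha : 0 < a) (x : ℝ) (j : ℕ) :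
    ‖x ^ j / ((j : ℝ) + a)‖ ≤ |x| ^ j / a := by
  rw [norm_div, norm_pow, Real.norm_eq_abs, Real.norm_eq_abs,
    abs_of_pos (add_pos_of_nonneg_of_pos j.cast_nonneg ha)]
  exact div_le_div_of_nonneg_left (pow_nonneg (abs_nonneg x) j) ha
    (le_add_of_nonneg_left j.cast_nonneg)

lemma summable_pow_div_natCast_add (ha : 0 < a) (hx : |x| < 1) :
    Summable fun j : ℕ => x ^ j / ((j : ℝ) + a) :=
  .of_norm_bounded ((summable_geometric_of_lt_one (abs_nonneg x) hx).div_const a)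
    (norm_pow_div_natCast_add_le ha x)

lemma hasSum_mul_lerchPhi (ha : 0 < a) (hx : |x| < 1) :
    HasSum (fun j : ℕ => x ^ (j + 1) / ((j : ℝ) + a)) (x * lerchPhi x a) := by
  have h := (summable_pow_div_natCast_add ha hx).hasSum.mul_left x
  simp only [mul_div_assoc', ← pow_succ'] at h
  exact h

lemma continuousOn_lerchPhi (ha : 0 < a) : ContinuousOn (lerchPhi · a) (Ioo (-1) 1) := by
  intro x hx
  obtain ⟨r, hxr, hr1⟩ := exists_between (abs_lt.2 hx)
  have hr0 : 0 ≤ r := (abs_nonneg x).trans hxr.le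
  have hcont : ContinuousOn (lerchPhi · a) (Icc (-r) r) :=
    continuousOn_tsum (fun j => (continuous_pow j).continuousOn.div_const _)
      ((summable_geometric_of_lt_one hr0 hr1).div_const a)
      fun j t ht => (norm_pow_div_natCast_add_le ha t j).trans (by gcongr; exact abs_le.2 ht)
  have hxr' := abs_lt.1 hxr
  exact (hcont.continuousAt (Icc_mem_nhds hxr'.1 hxr'.2)).continuousWithinAt

lemma strictMonoOn_mul_lerchPhi (ha : 0 < a) :
    StrictMonoOn (fun x => x * lerchPhi x a) (Ico 0 1) := by
  intro x hx y hy hxy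
  refine hasSum_lt (i := 0) (fun j => ?_) ?_ (hasSum_mul_lerchPhi ha ?_) (hasSum_mul_lerchPhi ha ?_)
  · exact div_le_div_of_nonneg_right (pow_le_pow_left₀ hx.1 hxy.le _)
      (add_pos_of_nonneg_of_pos j.cast_nonneg ha).le
  · simpa using div_lt_div_of_pos_right hxy ha
  · exact (abs_of_nonneg hx.1).trans_lt hx.2
  · exact (abs_of_nonneg (hx.1.trans hxy.le)).trans_lt hy.2

lemma pow_mul_sum_range_le_mul_lerchPhi (ha : 0 < a) (hx0 : 0 ≤ x) (hx1 : x < 1) (N : ℕ) :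
    x ^ N * ∑ j ∈ Finset.range N, 1 / ((j : ℝ) + a) ≤ x * lerchPhi x a := by
  have hsum := hasSum_mul_lerchPhi ha ((abs_of_nonneg hx0).trans_lt hx1)
  calc x ^ N * ∑ j ∈ Finset.range N, 1 / ((j : ℝ) + a)
      ≤ ∑ j ∈ Finset.range N, x ^ (j + 1) / ((j : ℝ) + a) := by
        rw [Finset.mul_sum]
        refine Finset.sum_le_sum fun j hj => ?_
        rw [mul_one_div]
        exact div_le_div_of_nonneg_right (pow_le_pow_of_le_one hx0 hx1.le (Finset.mem_range.1 hj))
          (add_pos_of_nonneg_of_pos j.cast_nonneg ha).le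
    _ ≤ x * lerchPhi x a := sum_le_hasSum _ (fun j _ => by positivity) hsum

lemma tendsto_sum_range_one_div_natCast_add_atTop (ha : 0 < a) :
    Tendsto (fun N : ℕ => ∑ j ∈ Finset.range N, 1 / ((j : ℝ) + a)) atTop atTop := by
  refine (not_summable_iff_tendsto_nat_atTop_of_nonneg fun j => by positivity).1 ?_
  have := (Real.summable_one_div_nat_add_rpow a 1).not.2 (lt_irrefl 1)
  convert this using 3 with j
  rw [Real.rpow_one, abs_of_pos (add_pos_of_nonneg_of_pos j.cast_nonneg ha)]

lemma tendsto_mul_lerchPhi_atTop (ha : 0 < a) :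
    Tendsto (fun x => x * lerchPhi x a) (𝓝[<] 1) atTop := by
  refine tendsto_atTop.2 fun M => ?_
  obtain ⟨N, hN⟩ := ((tendsto_sum_range_one_div_natCast_add_atTop ha).eventually_ge_atTop
    (2 * max M 0)).exists
  have hpow : ∀ᶠ x in 𝓝[<] (1 : ℝ), 1 / 2 ≤ x ^ N :=
    nhdsWithin_le_nhds <| ((continuous_pow N).tendsto' 1 1 (one_pow N)).eventually
      (eventually_ge_nhds (by norm_num))
  filter_upwards [hpow, Ioo_mem_nhdsLT one_pos] with x hxN hx
  calc M ≤ 1 / 2 * (2 * max M 0) := by linarith [le_max_left M 0]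
    _ ≤ x ^ N * ∑ j ∈ Finset.range N, 1 / ((j : ℝ) + a) :=
        mul_le_mul hxN hN (by positivity) (pow_nonneg hx.1.le N)
    _ ≤ x * lerchPhi x a := pow_mul_sum_range_le_mul_lerchPhi ha hx.1.le hx.2 N

end lerchPhi

lemma tendsto_one_sub_nhdsGT_zero : Tendsto (fun y : ℝ => 1 - y) (𝓝[>] 0) (𝓝[<] 1) :=
  tendsto_nhdsWithin_of_tendsto_nhds_of_eventually_within _
    (by simpa using ((continuous_sub_left (1 : ℝ)).tendsto 0).mono_left nhdsWithin_le_nhds)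
    (eventually_nhdsWithin_of_forall fun y (hy : 0 < y) => by simpa using hy)

/-- With `g(y) = (1-y)·Φ(1-y,1,Δ)` for a fixed integer `Δ ≥ 2`: `g` is continuous
and strictly decreasing on `(0,1)`, `g(y) → ∞` as `y → 0⁺`, `g(1) = 0`, and for
every `ε > 0` with `Δε < g(y₀)` for some `y₀ ∈ (0,1)`, the equation `g(y) = Δε`
has a unique solution `y ∈ (0,1)`. -/
theorem g_properties (Δ : ℕ) (hΔ : 2 ≤ Δ) :
    ContinuousOn (fun y : ℝ => (1 - y) * ∑' j : ℕ, (1 - y) ^ j / ((j : ℝ) + Δ))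
      (Set.Ioo 0 1) ∧
    StrictAntiOn (fun y : ℝ => (1 - y) * ∑' j : ℕ, (1 - y) ^ j / ((j : ℝ) + Δ))
      (Set.Ioo 0 1) ∧
    Filter.Tendsto (fun y : ℝ => (1 - y) * ∑' j : ℕ, (1 - y) ^ j / ((j : ℝ) + Δ))
      (nhdsWithin 0 (Set.Ioi 0)) Filter.atTop ∧
    (fun y : ℝ => (1 - y) * ∑' j : ℕ, (1 - y) ^ j / ((j : ℝ) + Δ)) 1 = 0 ∧
    (∀ ε : ℝ, 0 < ε →
      (∃ y₀ ∈ Set.Ioo (0 : ℝ) 1,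
        Δ * ε < (1 - y₀) * ∑' j : ℕ, (1 - y₀) ^ j / ((j : ℝ) + Δ)) →
      ∃! y : ℝ, y ∈ Set.Ioo (0 : ℝ) 1 ∧
        (1 - y) * (∑' j : ℕ, (1 - y) ^ j / ((j : ℝ) + Δ)) = Δ * ε) := by
  have ha : (0 : ℝ) < Δ := by exact_mod_cast (by omega : 0 < Δ)
  have hcont : ContinuousOn (fun y : ℝ => (1 - y) * lerchPhi (1 - y) Δ) (Ioc 0 1) :=
    (continuousOn_id.mul (continuousOn_lerchPhi ha)).comp (by fun_prop)
      fun y hy => ⟨by linarith [hy.2], by linarith [hy.1]⟩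
  have hanti : StrictAntiOn (fun y : ℝ => (1 - y) * lerchPhi (1 - y) Δ) (Ioo 0 1) :=
    (strictMonoOn_mul_lerchPhi ha).comp_strictAntiOn (fun y _ z _ h => by linarith)
      fun y hy => ⟨by linarith [hy.2], by linarith [hy.1]⟩
  refine ⟨hcont.mono Ioo_subset_Ioc_self, hanti,
    (tendsto_mul_lerchPhi_atTop ha).comp tendsto_one_sub_nhdsGT_zero, by simp, ?_⟩
  rintro ε hε ⟨y₀, hy₀, hlt⟩
  have hΔε : 0 < (Δ : ℝ) * ε := by positivity
  obtain ⟨y, hy, hyε⟩ := intermediate_value_Icc' hy₀.2.le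
    (hcont.mono (Icc_subset_Ioc hy₀.1 le_rfl)) ⟨by simpa using hΔε.le, hlt.le⟩
  have hy1 : y ≠ 1 := by
    rintro rfl
    simp [hΔε.ne] at hyε
  have hy_mem : y ∈ Ioo 0 1 := ⟨hy₀.1.trans_le hy.1, hy.2.lt_of_ne hy1⟩
  exact ⟨y, ⟨hy_mem, hyε⟩, fun z hz => hanti.injOn hz.1 hy_mem (hz.2.trans hyε.symm)⟩
end

section
/- Fix u ∈ (1/2, 1), let Δ = ⌈1/(1-u)⌉, c_i = 1/(u·i·(i-1)) for 2 ≤ i ≤ Δ-1, and c_Δ = 1 - (Δ-2)/(u(Δ-1)). Then for every x ∈ [0, u), 1/(1 - ∑_{i=2}^{Δ} c_i x^i) ≤ (1 - [x ≥ u/2]/(8(1+ln 2)Δ)) / ((1 - x/u)(1 - ln(1 - x/u))), where [P] is 1 if P holds and 0 otherwise. -/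
/-!
Write `y = x / u`. The denominator on the right is `(1 - y) (1 - log (1 - y)) = 1 - ∑_{i ≥ 2} yⁱ / (i (i - 1))`,
and termwise `cᵢ xⁱ ≤ yⁱ / (i (i - 1))`: for `i < Δ` because `uⁱ ≤ u`, for `i = Δ` because
`1 ≤ Δ (1 - u) < 2 - u`. The term `i = 2` has slack `(1 - u) y² / 2`, which is at least `1 / (8 Δ)`
once `y ≥ 1 / 2`. Hence `1 - ∑ cᵢ xⁱ ≥ (1 - y) (1 - log (1 - y)) + [x ≥ u / 2] / (8 Δ)`, and inverting
gives the bound.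
-/

open Real Finset

theorem hasSum_pow_div_mul_sub_one {y : ℝ} (hy : |y| < 1) :
    HasSum (fun i : ℕ => y ^ i / (i * (i - 1 : ℝ))) (y + (1 - y) * log (1 - y)) := by
  have hlog := hasSum_pow_div_log_of_abs_lt_one hy
  have hlog' : HasSum (fun n : ℕ => y ^ (n + 2) / (n + 2 : ℝ)) (-log (1 - y) - y) := by
    rw [← hasSum_nat_add_iff' 1] at hlog
    simpa [add_assoc, one_add_one_eq_two] using hlog
  -- `y ^ (n + 2) / ((n + 2) (n + 1)) = y · y ^ (n + 1) / (n + 1) - y ^ (n + 2) / (n + 2)`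
  have hshift : HasSum (fun n : ℕ => y ^ (n + 2) / ((n + 2 : ℕ) * ((n + 2 : ℕ) - 1 : ℝ)))
      (y + (1 - y) * log (1 - y)) := by
    have h := (hlog.mul_left y).sub hlog'
    rw [show y * -log (1 - y) - (-log (1 - y) - y) = y + (1 - y) * log (1 - y) by ring] at h
    refine h.congr_fun fun n => ?_
    push_cast
    rw [show (n + 2 - 1 : ℝ) = n + 1 by ring]
    field_simp
    ring
  -- the terms `i = 0, 1` are divisions by zero, hence zero
  rw [← hasSum_nat_add_iff' 2]
  simpa [sum_range_succ] using hshift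

theorem sum_Icc_pow_div_mul_sub_one_le {y : ℝ} (hy0 : 0 ≤ y) (hy1 : y < 1) (N : ℕ) :
    ∑ i ∈ Icc 2 N, y ^ i / (i * (i - 1 : ℝ)) ≤ y + (1 - y) * log (1 - y) := by
  refine sum_le_hasSum _ (fun i _ => ?_) (hasSum_pow_div_mul_sub_one (by rwa [abs_of_nonneg hy0]))
  rcases Nat.lt_or_ge i 1 with hi | hi
  · simp [Nat.lt_one_iff.mp hi]
  · have : (1 : ℝ) ≤ i := by exact_mod_cast hi
    exact div_nonneg (pow_nonneg hy0 i) (mul_nonneg (by linarith) (by linarith))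

theorem one_le_ceil_one_div_mul {t : ℝ} (ht : 0 < t) : 1 ≤ ⌈1 / t⌉₊ * t :=
  (div_le_iff₀ ht).mp (Nat.le_ceil _)

theorem ceil_one_div_mul_lt {t : ℝ} (ht : 0 < t) : ⌈1 / t⌉₊ * t < 1 + t := by
  have h := mul_lt_mul_of_pos_right (Nat.ceil_lt_add_one (one_div_pos.mpr ht).le) ht
  rwa [add_mul, one_div_mul_cancel ht.ne', one_mul] at h

theorem three_le_ceil_one_div_one_sub {u : ℝ} (hu1 : 1 / 2 < u) (hu2 : u < 1) :
    3 ≤ ⌈1 / (1 - u)⌉₊ := by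
  refine Nat.lt_ceil.mpr ?_
  rw [lt_div_iff₀ (by linarith)]
  push_cast
  linarith

theorem Finset.sum_add_le_sum_of_le {ι M : Type*} [AddCommMonoid M] [PartialOrder M]
    [IsOrderedAddMonoid M] [DecidableEq ι] {s : Finset ι} {f g : ι → M} {j : ι} {ε : M}
    (hj : j ∈ s) (hfg : ∀ i ∈ s, f i ≤ g i) (hεj : f j + ε ≤ g j) :
    ∑ i ∈ s, f i + ε ≤ ∑ i ∈ s, g i := by
  rw [← add_sum_erase s f hj, ← add_sum_erase s g hj, add_right_comm]
  exact add_le_add hεj (sum_le_sum fun i hi => hfg i (mem_of_mem_erase hi))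

theorem one_div_mul_pow_le {u x : ℝ} (hu0 : 0 < u) (hu1 : u ≤ 1) (hx : 0 ≤ x) {i : ℕ}
    (hi : 2 ≤ i) : 1 / (u * i * (i - 1 : ℝ)) * x ^ i ≤ (x / u) ^ i / (i * (i - 1 : ℝ)) := by
  have hi' : (2 : ℝ) ≤ i := by exact_mod_cast hi
  have hd : 0 < (i : ℝ) * (i - 1) := by nlinarith
  rw [one_div_mul_eq_div, div_pow, div_div, mul_assoc]
  exact div_le_div_of_nonneg_left (by positivity) (by positivity)
    (mul_le_mul_of_nonneg_right (pow_le_of_le_one hu0.le hu1 (by omega)) hd.le)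

theorem one_sub_sub_two_div_eq {u d : ℝ} (hu : u ≠ 0) (hd : d ≠ 1) :
    1 - (d - 2) / (u * (d - 1)) = (2 - u - d * (1 - u)) / (u * (d - 1)) := by
  have : d - 1 ≠ 0 := sub_ne_zero.mpr hd
  field_simp
  ring

theorem one_sub_mul_mul_pow_le_one {u : ℝ} (hu0 : 0 < u) (hu1 : u < 1) {Δ : ℕ} (hΔ : 3 ≤ Δ)
    (hΔu : Δ * (1 - u) < 2 - u) : (1 - u) * Δ * u ^ (Δ - 1) ≤ 1 :=
  calc (1 - u) * Δ * u ^ (Δ - 1) ≤ (2 - u) * u ^ 2 := by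
        rw [mul_comm (1 - u)]
        exact mul_le_mul hΔu.le (pow_le_pow_of_le_one hu0.le hu1.le (by omega)) (by positivity)
          (by linarith)
    _ ≤ 1 := by nlinarith [mul_pos hu0 (sub_pos.mpr hu1)]

theorem one_sub_sub_two_div_nonneg {u : ℝ} (hu0 : 0 < u) {Δ : ℕ} (hΔ : 3 ≤ Δ)
    (hhi : Δ * (1 - u) < 2 - u) : 0 ≤ 1 - (Δ - 2 : ℝ) / (u * (Δ - 1)) := by
  have hΔ' : (3 : ℝ) ≤ Δ := by exact_mod_cast hΔ
  rw [one_sub_sub_two_div_eq hu0.ne' (by linarith)]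
  exact div_nonneg (by linarith) (mul_nonneg hu0.le (by linarith))

theorem one_sub_sub_two_div_mul_pow_le {u x : ℝ} (hu0 : 0 < u) (hu1 : u < 1) {Δ : ℕ} (hΔ : 3 ≤ Δ)
    (hlo : 1 ≤ Δ * (1 - u)) (hhi : Δ * (1 - u) < 2 - u) (hx : 0 ≤ x) :
    (1 - (Δ - 2 : ℝ) / (u * (Δ - 1))) * x ^ Δ ≤ (x / u) ^ Δ / (Δ * (Δ - 1 : ℝ)) := by
  have hΔ' : (3 : ℝ) ≤ Δ := by exact_mod_cast hΔ
  have hd : 0 < u * (Δ - 1 : ℝ) := mul_pos hu0 (by linarith)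
  calc (1 - (Δ - 2 : ℝ) / (u * (Δ - 1))) * x ^ Δ ≤ (1 - u) / (u * (Δ - 1)) * x ^ Δ := by
        rw [one_sub_sub_two_div_eq hu0.ne' (by linarith)]
        exact mul_le_mul_of_nonneg_right (div_le_div_of_nonneg_right (by linarith) hd.le)
          (pow_nonneg hx Δ)
    _ = ((1 - u) * Δ * u ^ (Δ - 1)) * ((x / u) ^ Δ / (Δ * (Δ - 1 : ℝ))) := by
        obtain ⟨k, rfl⟩ := Nat.exists_eq_add_of_le' (by omega : 1 ≤ Δ)
        rw [Nat.add_sub_cancel, div_pow, pow_succ u]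
        field_simp
    _ ≤ (x / u) ^ Δ / (Δ * (Δ - 1 : ℝ)) :=
        mul_le_of_le_one_left (div_nonneg (by positivity) (by nlinarith))
          (one_sub_mul_mul_pow_le_one hu0 hu1 hΔ hhi)

theorem sq_div_two_mul_add_le {u x : ℝ} (hu0 : 0 < u) {Δ : ℕ} (hlo : 1 ≤ Δ * (1 - u))
    (hx : 0 ≤ x) :
    x ^ 2 / (2 * u) + (if u / 2 ≤ x then 1 else 0) / (8 * Δ) ≤ (x / u) ^ 2 / 2 := by
  have hΔ : (0 : ℝ) < Δ := Nat.cast_pos.mpr (Nat.pos_of_ne_zero fun h => by norm_num [h] at hlo)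
  have hu1 : 0 < 1 - u := by nlinarith
  have hgap : (x / u) ^ 2 / 2 - x ^ 2 / (2 * u) = (x / u) ^ 2 * (1 - u) / 2 := by
    field_simp
  split_ifs with hxu
  · have hy : 1 / 4 ≤ (x / u) ^ 2 := by
      rw [div_pow, le_div_iff₀ (by positivity)]
      nlinarith
    have : 1 / (8 * Δ) ≤ (1 - u) / 8 := by
      rw [div_le_div_iff₀ (by positivity) (by norm_num)]
      linarith
    nlinarith
  · have := mul_nonneg (sq_nonneg (x / u)) hu1.le
    rw [zero_div, add_zero]
    linarith

theorem one_div_le_div_of_add_le {S g e e' : ℝ} (hS : 0 ≤ S) (hg : 0 < g) (he' : 0 ≤ e')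
    (he'e : e' ≤ e) (h : g + e ≤ 1 - S) : 1 / (1 - S) ≤ (1 - e') / g := by
  rw [div_le_div_iff₀ (by linarith) hg]
  nlinarith [mul_nonneg he' hS]

theorem coeff_nonneg {u : ℝ} (hu0 : 0 < u) {Δ : ℕ} (hΔ : 3 ≤ Δ) (hhi : Δ * (1 - u) < 2 - u)
    {c : ℕ → ℝ} (hc : ∀ i, 2 ≤ i → i ≤ Δ - 1 → c i = 1 / (u * i * ((i : ℝ) - 1)))
    (hcΔ : c Δ = 1 - ((Δ : ℝ) - 2) / (u * ((Δ : ℝ) - 1))) : ∀ i ∈ Icc 2 Δ, 0 ≤ c i := by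
  intro i hi
  obtain ⟨hi2, hiΔ⟩ := mem_Icc.mp hi
  rcases hiΔ.eq_or_lt with rfl | hiΔ
  · exact hcΔ ▸ one_sub_sub_two_div_nonneg hu0 hΔ hhi
  · have hi' : (2 : ℝ) ≤ i := by exact_mod_cast hi2
    rw [hc i hi2 (by omega)]
    exact one_div_nonneg.mpr (mul_nonneg (mul_nonneg hu0.le (by linarith)) (by linarith))

theorem coeff_mul_pow_le {u x : ℝ} (hu0 : 0 < u) (hu1 : u < 1) {Δ : ℕ} (hΔ : 3 ≤ Δ)
    (hlo : 1 ≤ Δ * (1 - u)) (hhi : Δ * (1 - u) < 2 - u) (hx : 0 ≤ x)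
    {c : ℕ → ℝ} (hc : ∀ i, 2 ≤ i → i ≤ Δ - 1 → c i = 1 / (u * i * ((i : ℝ) - 1)))
    (hcΔ : c Δ = 1 - ((Δ : ℝ) - 2) / (u * ((Δ : ℝ) - 1))) :
    ∀ i ∈ Icc 2 Δ, c i * x ^ i ≤ (x / u) ^ i / (i * (i - 1 : ℝ)) := by
  intro i hi
  obtain ⟨hi2, hiΔ⟩ := mem_Icc.mp hi
  rcases hiΔ.eq_or_lt with rfl | hiΔ
  · exact hcΔ ▸ one_sub_sub_two_div_mul_pow_le hu0 hu1 hΔ hlo hhi hx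
  · exact hc i hi2 (by omega) ▸ one_div_mul_pow_le hu0 hu1.le hx hi2

open Classical in
/-- Lemma relating the truncated series for `D_u` to the `u = 1` expression. -/
theorem partial_ub (u : ℝ) (hu1 : 1 / 2 < u) (hu2 : u < 1)
    (Δ : ℕ) (hΔ : Δ = ⌈1 / (1 - u)⌉₊)
    (c : ℕ → ℝ)
    (hc : ∀ i, 2 ≤ i → i ≤ Δ - 1 → c i = 1 / (u * i * ((i : ℝ) - 1)))
    (hcΔ : c Δ = 1 - ((Δ : ℝ) - 2) / (u * ((Δ : ℝ) - 1)))
    (x : ℝ) (hx : x ∈ Set.Ico 0 u) :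
    1 / (1 - ∑ i ∈ Finset.Icc 2 Δ, c i * x ^ i) ≤
      (1 - (if u / 2 ≤ x then (1 : ℝ) else 0) / (8 * (1 + Real.log 2) * Δ)) /
        ((1 - x / u) * (1 - Real.log (1 - x / u))) := by
  obtain ⟨hx0, hxu⟩ := hx
  have hu0 : 0 < u := by linarith
  have hΔ3 : 3 ≤ Δ := hΔ ▸ three_le_ceil_one_div_one_sub hu1 hu2
  have hlo : 1 ≤ Δ * (1 - u) := hΔ ▸ one_le_ceil_one_div_mul (sub_pos.mpr hu2)
  have hhi : Δ * (1 - u) < 2 - u := by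
    have := hΔ ▸ ceil_one_div_mul_lt (sub_pos.mpr hu2)
    linarith
  have hy0 : 0 ≤ x / u := div_nonneg hx0 hu0.le
  have hy1 : x / u < 1 := (div_lt_one hu0).mpr hxu
  set ind : ℝ := if u / 2 ≤ x then 1 else 0
  have hgap : c 2 * x ^ 2 + ind / (8 * Δ) ≤ (x / u) ^ 2 / ((2 : ℕ) * ((2 : ℕ) - 1 : ℝ)) := by
    rw [hc 2 le_rfl (by omega)]
    convert sq_div_two_mul_add_le hu0 hlo hx0 using 2 <;> push_cast <;> ring
  have hsum : ∑ i ∈ Icc 2 Δ, c i * x ^ i + ind / (8 * Δ)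
      ≤ x / u + (1 - x / u) * log (1 - x / u) :=
    (sum_add_le_sum_of_le (left_mem_Icc.mpr (by omega))
      (coeff_mul_pow_le hu0 hu2 hΔ3 hlo hhi hx0 hc hcΔ) hgap).trans
      (sum_Icc_pow_div_mul_sub_one_le hy0 hy1 Δ)
  have hlog : log (1 - x / u) ≤ 0 := log_nonpos (by linarith) (by linarith)
  refine one_div_le_div_of_add_le
    (sum_nonneg fun i hi => mul_nonneg (coeff_nonneg hu0 hΔ3 hhi hc hcΔ i hi) (by positivity))
    (mul_pos (by linarith) (by linarith)) (by positivity) (e := ind / (8 * Δ)) ?_ ?_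
  · gcongr
    linarith [log_nonneg one_le_two]
  · linear_combination hsum
end

section
/- For every x ∈ [0, 1/2], arctanh(x(1 - e^{1-e})) ≤ 0.97·x. -/
/-- The inverse hyperbolic tangent. -/
noncomputable def arctanh (x : ℝ) : ℝ := (1 / 2) * Real.log ((1 + x) / (1 - x))

lemma arctanh_le_aux (y : ℝ) (h0 : 0 ≤ y) (h1 : y ≤ 0.43) :
    arctanh y ≤ y + y ^ 3 / 3 + y ^ 5 / (1 - y) := by
  have hylt : |y| < 1 := by rw [abs_of_nonneg h0]; linarith
  have hA := Real.abs_log_sub_add_sum_range_le hylt 4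
  have hylt' : |(-y)| < 1 := by rwa [abs_neg]
  have hB := Real.abs_log_sub_add_sum_range_le hylt' 4
  simp only [Finset.sum_range_succ, Finset.sum_range_zero, abs_neg, abs_of_nonneg h0] at hA hB
  rw [abs_le] at hA hB
  have h1my : (0:ℝ) < 1 - y := by linarith
  have h1py : (0:ℝ) < 1 + y := by linarith
  have hlog : Real.log ((1 + y) / (1 - y)) = Real.log (1 + y) - Real.log (1 - y) :=
    Real.log_div (by linarith) (by linarith)
  have hsub : (1 : ℝ) - -y = 1 + y := by ring
  rw [hsub] at hB
  unfold arctanh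
  rw [hlog]
  have hA1 := hA.2
  have hB1 := hB.2
  have hpow : y ^ 5 / (1 - y) ≥ 0 := by positivity
  nlinarith [hA.1, hB.1, hA1, hB1]

/-- For `x ∈ [0, 1/2]`, `arctanh(x(1 - e^{1-e})) ≤ 0.97 x`. -/
theorem arctanh_upper_bound (x : ℝ) (hx : x ∈ Set.Icc (0 : ℝ) (1 / 2)) :
    arctanh (x * (1 - Real.exp (1 - Real.exp 1))) ≤ 0.97 * x := by
  obtain ⟨hx0, hx2⟩ := hx
  -- bounds on c := 1 - exp (1 - e)
  have he : Real.exp 1 < 2.7182818286 := Real.exp_one_lt_d9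
  have he2 : (2:ℝ) ≤ Real.exp 1 := by
    have := Real.add_one_le_exp (1:ℝ); linarith
  have hcexp_pos : 0 < Real.exp (1 - Real.exp 1) := Real.exp_pos _
  have hcexp_le : Real.exp (1 - Real.exp 1) ≤ 1 := by
    rw [Real.exp_le_one_iff]; linarith
  have hclb : Real.exp (1 - Real.exp 1) ≥ 0.1445 := by
    have h8 : Real.exp (1 - Real.exp 1) = (Real.exp ((1 - Real.exp 1) / 8)) ^ 8 := by
      rw [← Real.exp_nat_mul]; congr 1; push_cast; ring
    have hstep : Real.exp ((1 - Real.exp 1) / 8) ≥ (9 - Real.exp 1) / 8 := by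
      have := Real.add_one_le_exp ((1 - Real.exp 1) / 8); linarith
    calc Real.exp (1 - Real.exp 1) = (Real.exp ((1 - Real.exp 1) / 8)) ^ 8 := h8
      _ ≥ (0.7852147714 : ℝ) ^ 8 := by
          apply pow_le_pow_left₀ (by norm_num) (by linarith)
      _ ≥ 0.1445 := by norm_num
  -- generic bound for an abstract y
  have key : ∀ y : ℝ, 0 ≤ y → y ≤ 0.8555 * x → arctanh y ≤ 0.97 * x := by
    intro y hy0 hyx
    have hy43 : y ≤ 0.43 := by linarith
    have hmain := arctanh_le_aux y hy0 hy43
    have h1my : (0.57:ℝ) ≤ 1 - y := by linarith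
    have hdiv : y ^ 5 / (1 - y) ≤ (100/57) * y ^ 5 := by
      have h := div_le_div_of_nonneg_left (by positivity : (0:ℝ) ≤ y ^ 5)
        (by norm_num : (0:ℝ) < 57/100) (by linarith : (57:ℝ)/100 ≤ 1 - y)
      calc y ^ 5 / (1 - y) ≤ y ^ 5 / (57/100) := h
        _ = (100/57) * y ^ 5 := by ring
    have hy3 : y ^ 3 ≤ (0.8555 * x) ^ 3 := pow_le_pow_left₀ hy0 hyx 3
    have hy5 : y ^ 5 ≤ (0.8555 * x) ^ 5 := pow_le_pow_left₀ hy0 hyx 5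
    have hq : (0:ℝ) ≤ x * ((1/2 - x) * (1/2 + x)) :=
      mul_nonneg hx0 (mul_nonneg (by linarith) (by linarith))
    have hx3 : x ^ 3 ≤ (1/4) * x := by nlinarith [hq]
    have hsq : (0:ℝ) ≤ 1/4 - x*x := by nlinarith [hq, hx0]
    have hq5 : (0:ℝ) ≤ x * ((1/4 - x*x) * (1/4 + x*x)) :=
      mul_nonneg hx0 (mul_nonneg hsq (by positivity))
    have hx5 : x ^ 5 ≤ (1/16) * x := by nlinarith [hq5]
    have hx3n : (0:ℝ) ≤ x ^ 3 := pow_nonneg hx0 3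
    have hx5n : (0:ℝ) ≤ x ^ 5 := pow_nonneg hx0 5
    have hy3' : y ^ 3 ≤ 0.6262 * x ^ 3 := by
      calc y ^ 3 ≤ (0.8555 * x) ^ 3 := hy3
        _ = 0.8555 ^ 3 * x ^ 3 := by ring
        _ ≤ 0.6262 * x ^ 3 :=
          mul_le_mul_of_nonneg_right (by norm_num) hx3n
    have hy5' : y ^ 5 ≤ 0.4583 * x ^ 5 := by
      calc y ^ 5 ≤ (0.8555 * x) ^ 5 := hy5
        _ = 0.8555 ^ 5 * x ^ 5 := by ring
        _ ≤ 0.4583 * x ^ 5 :=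
          mul_le_mul_of_nonneg_right (by norm_num) hx5n
    calc arctanh y ≤ y + y ^ 3 / 3 + y ^ 5 / (1 - y) := hmain
      _ ≤ y + y ^ 3 / 3 + (100/57) * y ^ 5 := by linarith
      _ ≤ 0.97 * x := by linarith
  exact key _ (mul_nonneg hx0 (by linarith)) (by nlinarith)
end

section
/- The maximum of the function f(x) = (x(1 - e^{1-e}))^{1/(1-x)} over x ∈ (0, 1) is at most 1/5; consequently e^{2-e} - (u(1 - e^{1-e}))^{1/(1-u)} > 1/4 for every u ∈ (0,1). -/
/-- `(x(1-e^{1-e}))^{1/(1-x)} ≤ 1/5` on `(0,1)`, hence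
`e^{2-e} - (u(1-e^{1-e}))^{1/(1-u)} > 1/4` for `u ∈ (0,1)`. -/
theorem rpow_max_bound :
    (∀ x ∈ Set.Ioo (0 : ℝ) 1,
      (x * (1 - Real.exp (1 - Real.exp 1))) ^ (1 / (1 - x)) ≤ 1 / 5) ∧
    (∀ u ∈ Set.Ioo (0 : ℝ) 1,
      Real.exp (2 - Real.exp 1) -
        (u * (1 - Real.exp (1 - Real.exp 1))) ^ (1 / (1 - u)) > 1 / 4) := by
  have he1 : (2.7182818283 : ℝ) < Real.exp 1 := Real.exp_one_gt_d9
  have he2 : Real.exp 1 < 2.7182818286 := Real.exp_one_lt_d9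
  -- exp(3 - e) ≥ 4 - e
  have hL1 : Real.exp (1 - Real.exp 1) * (Real.exp 1 * Real.exp 1) ≥ 4 - Real.exp 1 := by
    have h1 : Real.exp (1 - Real.exp 1) * (Real.exp 1 * Real.exp 1)
        = Real.exp (3 - Real.exp 1) := by
      rw [← Real.exp_add, ← Real.exp_add]; ring_nf
    have h2 := Real.add_one_le_exp (3 - Real.exp 1)
    linarith [h1 ▸ h2]
  -- log 5 ≥ 1.56
  have hlog5 : (1.56 : ℝ) ≤ Real.log 5 := by
    rw [Real.le_log_iff_exp_le (by norm_num)]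
    have h1 : Real.exp 1.56 * (Real.exp 0.22 * Real.exp 0.22) = Real.exp 1 * Real.exp 1 := by
      rw [← Real.exp_add, ← Real.exp_add, ← Real.exp_add]; norm_num
    have h2 : (1.22 : ℝ) ≤ Real.exp 0.22 := by
      have := Real.add_one_le_exp (0.22 : ℝ); linarith
    nlinarith [Real.exp_pos (1.56 : ℝ), Real.exp_pos (0.22 : ℝ)]
  have hlog5pos : (0 : ℝ) < Real.log 5 := by linarith
  -- main numeric: 5c ≤ e log 5
  have hM : 5 * (1 - Real.exp (1 - Real.exp 1)) ≤ Real.exp 1 * Real.log 5 := by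
    have hep : (0 : ℝ) < Real.exp 1 := Real.exp_pos 1
    have hee : (0 : ℝ) < Real.exp 1 * Real.exp 1 := mul_pos hep hep
    have hd : (0 : ℝ) ≤ Real.exp 1 - 2.7182818283 := by linarith
    have hcube : 5 * (1 - Real.exp (1 - Real.exp 1)) * (Real.exp 1 * Real.exp 1)
        ≤ Real.exp 1 * Real.log 5 * (Real.exp 1 * Real.exp 1) := by
      nlinarith [hL1, mul_nonneg (mul_nonneg hd hd) hd, mul_nonneg hd hd,
        mul_nonneg (sub_nonneg.mpr hlog5) (le_of_lt (mul_pos hee hep))]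
    exact le_of_mul_le_mul_right hcube hee
  have hc : (0 : ℝ) < 1 - Real.exp (1 - Real.exp 1) := by
    have : Real.exp (1 - Real.exp 1) < 1 := by
      rw [Real.exp_lt_one_iff]; linarith
    linarith
  set c : ℝ := 1 - Real.exp (1 - Real.exp 1) with hcdef
  -- log c ≤ 1 + log(log 5) - log 5
  have hlogc : Real.log c ≤ 1 + Real.log (Real.log 5) - Real.log 5 := by
    have h5c : Real.log (5 * c) ≤ Real.log (Real.exp 1 * Real.log 5) :=
      Real.log_le_log (by positivity) hM
    rw [Real.log_mul (by norm_num) hc.ne', Real.log_mul (Real.exp_pos 1).ne' hlog5pos.ne',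
      Real.log_exp] at h5c
    linarith
  have key : ∀ x ∈ Set.Ioo (0 : ℝ) 1,
      (x * c) ^ (1 / (1 - x)) ≤ 1 / 5 := by
    rintro x ⟨hx0, hx1⟩
    have h1x : (0 : ℝ) < 1 - x := by linarith
    have hb : (0 : ℝ) < x * c := mul_pos hx0 hc
    rw [Real.rpow_def_of_pos hb]
    have h15 : (1 / 5 : ℝ) = Real.exp (-Real.log 5) := by
      rw [Real.exp_neg, Real.exp_log (by norm_num : (0:ℝ) < 5)]; norm_num
    rw [h15, Real.exp_le_exp, mul_one_div, div_le_iff₀ h1x]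
    have hxc : Real.log (x * c) = Real.log x + Real.log c :=
      Real.log_mul hx0.ne' hc.ne'
    have htan : Real.log (x * Real.log 5) ≤ x * Real.log 5 - 1 :=
      Real.log_le_sub_one_of_pos (mul_pos hx0 hlog5pos)
    have hsplit : Real.log (x * Real.log 5) = Real.log x + Real.log (Real.log 5) :=
      Real.log_mul hx0.ne' hlog5pos.ne'
    nlinarith [hxc, htan, hsplit, hlogc]
  refine ⟨key, fun u hu => ?_⟩
  have h1 := key u hu
  have h2 : Real.exp (2 - Real.exp 1) * Real.exp 1 = Real.exp (3 - Real.exp 1) := by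
    rw [← Real.exp_add]; ring_nf
  have h3 := Real.add_one_le_exp (3 - Real.exp 1)
  have h4 : (9 / 20 : ℝ) < Real.exp (2 - Real.exp 1) := by
    nlinarith [Real.exp_pos (2 - Real.exp 1), Real.exp_pos 1]
  linarith
end
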